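/- Let n ≥ 2 and let m_1, …, m_n be nonzero real numbers. Let 𝓜 be the (n−1)×(n−1) symmetric tridiagonal matrix with diagonal entries 𝓜_{ii} = 1/m_i + 1/m_{i+1} (1 ≤ i ≤ n−1) and off-diagonal entries 𝓜_{i,i−1} = 𝓜_{i−1,i} = −1/m_i (2 ≤ i ≤ n−1), all other entries zero. Then det 𝓜 = (m_1 + m_2 + ⋯ + m_n)/(m_1 m_2 ⋯ m_n). -/

import Mathlib

/-!
Expanding the determinant along its last row shows that the leading principal minors
`D_k` of a symmetric tridiagonal matrix satisfy the continuant recurrence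
`D_{k+2} = a_{k+1} D_{k+1} - b_k² D_k`. For `𝓜` this reads
`D_{k+2} = (1/m_{k+2} + 1/m_{k+3}) D_{k+1} - D_k / m_{k+2}²`, and a direct computation shows
that `(m_1 + ⋯ + m_{k+1}) / (m_1 ⋯ m_{k+1})` satisfies the same recurrence and initial values.
-/

open Finset Matrix

namespace Matrix
variable {R : Type*} [CommRing R]

def symmTridiagonal (a b : ℕ → R) (k : ℕ) : Matrix (Fin k) (Fin k) R :=
  of fun i j =>
    if (i : ℕ) = j then a i
    else if (i : ℕ) = j + 1 then b j
    else if (j : ℕ) = i + 1 then b i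
    else 0

theorem symmTridiagonal_submatrix_castSucc (a b : ℕ → R) (k : ℕ) :
    (symmTridiagonal a b (k + 1)).submatrix Fin.castSucc Fin.castSucc = symmTridiagonal a b k := by
  ext i j
  simp [symmTridiagonal]

theorem det_symmTridiagonal_submatrix_castSucc_succAbove (a b : ℕ → R) (k : ℕ) :
    ((symmTridiagonal a b (k + 2)).submatrix Fin.castSucc (Fin.last k).castSucc.succAbove).det =
      b k * (symmTridiagonal a b k).det := by
  set M := (symmTridiagonal a b (k + 2)).submatrix Fin.castSucc (Fin.last k).castSucc.succAbove
  have hcol : ∀ i : Fin k, M i.castSucc (Fin.last k) = 0 := by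
    intro i
    simp only [M, symmTridiagonal, submatrix_apply, ne_eq, Fin.castSucc_ne_last,
      not_false_eq_true, Fin.succAbove_ne_last_last, of_apply, Fin.val_castSucc, Fin.val_last]
    rw [if_neg (by omega), if_neg (by omega), if_neg (by omega)]
  have hcorner : M (Fin.last k) (Fin.last k) = b k := by
    simp [M, symmTridiagonal, show k ≠ k + 1 + 1 by omega]
  have hsub : M.submatrix Fin.castSucc Fin.castSucc = symmTridiagonal a b k := by
    ext i j
    simp [M, symmTridiagonal, Fin.succAbove_castSucc_of_lt]
  rw [det_succ_column M (Fin.last k), Fin.sum_univ_castSucc]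
  simp only [hcol, mul_zero, zero_mul, sum_const_zero, zero_add, Fin.succAbove_last, hcorner,
    hsub, ← two_mul, pow_mul, neg_one_sq, one_pow, one_mul]

theorem det_symmTridiagonal_succ_succ (a b : ℕ → R) (k : ℕ) :
    (symmTridiagonal a b (k + 2)).det =
      a (k + 1) * (symmTridiagonal a b (k + 1)).det - b k ^ 2 * (symmTridiagonal a b k).det := by
  set A := symmTridiagonal a b (k + 2)
  have hrow : ∀ j : Fin k, A (Fin.last _) j.castSucc.castSucc = 0 := by
    intro j
    simp only [A, symmTridiagonal, of_apply, Fin.val_last, Fin.val_castSucc]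
    rw [if_neg (by omega), if_neg (by omega), if_neg (by omega)]
  have hdiag : A (Fin.last _) (Fin.last _) = a (k + 1) := by simp [A, symmTridiagonal]
  have hoff : A (Fin.last _) (Fin.last k).castSucc = b k := by simp [A, symmTridiagonal]
  rw [det_succ_row A (Fin.last _), Fin.sum_univ_castSucc, Fin.sum_univ_castSucc]
  simp only [hrow, mul_zero, zero_mul, sum_const_zero, zero_add]
  rw [Fin.succAbove_last, symmTridiagonal_submatrix_castSucc,
    det_symmTridiagonal_submatrix_castSucc_succAbove, hdiag, hoff]
  simp only [Fin.val_last, Fin.val_castSucc, ← two_mul, pow_mul, neg_one_sq, one_pow,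
    show k + 1 + k = 2 * k + 1 by ring, pow_succ]
  ring

end Matrix

section CubicString

variable {K : Type*} [Field K]

def cubicStringMatrix (m : ℕ → K) (k : ℕ) : Matrix (Fin k) (Fin k) K :=
  symmTridiagonal (fun i => 1 / m (i + 1) + 1 / m (i + 2)) (fun i => -(1 / m (i + 2))) k

theorem det_cubicStringMatrix (m : ℕ → K) (k : ℕ) (hm : ∀ i ∈ Icc 1 (k + 1), m i ≠ 0) :
    (cubicStringMatrix m k).det =
      (∑ i ∈ Icc 1 (k + 1), m i) / ∏ i ∈ Icc 1 (k + 1), m i := by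
  induction k using Nat.twoStepInduction with
  | zero => simp [div_self (hm 1 (by simp))]
  | one =>
    have h₁ := hm 1 (by simp)
    have h₂ := hm 2 (by simp)
    rw [det_fin_one, sum_Icc_succ_top (Nat.le_succ 1), prod_Icc_succ_top (Nat.le_succ 1), Icc_self,
      sum_singleton, prod_singleton]
    simp only [cubicStringMatrix, symmTridiagonal, of_apply, Fin.val_eq_zero, if_pos, zero_add]
    field_simp
    ring
  | more k ih₀ ih₁ =>
    have hm₁ : ∀ i ∈ Icc 1 (k + 2), m i ≠ 0 :=
      fun i hi => hm i (Icc_subset_Icc_right (by omega) hi)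
    have hm₀ : ∀ i ∈ Icc 1 (k + 1), m i ≠ 0 :=
      fun i hi => hm₁ i (Icc_subset_Icc_right (by omega) hi)
    have hx := hm₁ (k + 2) (by simp)
    have hy := hm (k + 3) (by simp)
    have hp := prod_ne_zero_iff.mpr hm₀
    rw [cubicStringMatrix, det_symmTridiagonal_succ_succ, ← cubicStringMatrix,
      ← cubicStringMatrix, ih₀ hm₀, ih₁ hm₁, sum_Icc_succ_top (by omega : 1 ≤ k + 3),
      prod_Icc_succ_top (by omega : 1 ≤ k + 3), sum_Icc_succ_top (by omega : 1 ≤ k + 2),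
      prod_Icc_succ_top (by omega : 1 ≤ k + 2)]
    field_simp
    ring

end CubicString

theorem stmt4 (n : ℕ) (hn : 2 ≤ n) (m : ℕ → ℝ)
    (hm : ∀ i, 1 ≤ i → i ≤ n → m i ≠ 0) :
    (Matrix.of fun i j : Fin (n - 1) =>
      if (i : ℕ) = (j : ℕ) then 1 / m ((i : ℕ) + 1) + 1 / m ((i : ℕ) + 2)
      else if (i : ℕ) = (j : ℕ) + 1 then -(1 / m ((i : ℕ) + 1))
      else if (j : ℕ) = (i : ℕ) + 1 then -(1 / m ((j : ℕ) + 1))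
      else 0).det
    = (∑ k ∈ Finset.Icc 1 n, m k) / ∏ k ∈ Finset.Icc 1 n, m k := by
  obtain ⟨k, rfl⟩ : ∃ k, n = k + 1 := ⟨n - 1, by omega⟩
  rw [Nat.add_sub_cancel,
    ← det_cubicStringMatrix m k fun i hi => hm i (mem_Icc.1 hi).1 (mem_Icc.1 hi).2]
  congr 1
  ext i j
  simp only [cubicStringMatrix, symmTridiagonal, of_apply]
  split_ifs with hdiag hlower hupper
  · rfl
  · rw [hlower]
  · rw [hupper]
  · rfl
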